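/- Let S be a real n×n matrix with ‖S‖∞ ≤ 1/2, and let z, ĉ ∈ ℝⁿ satisfy z − S|z| = ĉ. If i is an index with |ĉ_i| = max_k |ĉ_k| and sign(ĉ_i) ≠ sign(z_i), then z_i = 0. -/

import Mathlib

/-!
Write `‖·‖` for the sup norm on `Fin n → ℝ`. Since every row of `S` has absolute sum at
most `1/2`, each entry of `S |z|` is at most `‖z‖ / 2` in absolute value. Reading
`z - S |z| = ĉ` at every entry gives `‖z‖ ≤ ‖ĉ‖ + ‖z‖ / 2`, so `‖z‖ ≤ 2 ‖ĉ‖ = 2 |ĉ_i|`, and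
reading it at `i` gives `|z_i - ĉ_i| ≤ ‖z‖ / 2 ≤ |ĉ_i|`. So `z_i` lies between `0` and
`2 ĉ_i`; if it is nonzero it has the sign of `ĉ_i`.
-/

open Matrix

theorem Matrix.abs_mulVec_apply_le {m n : Type*} [Fintype n] (S : Matrix m n ℝ) (v : n → ℝ)
    (i : m) : |(S *ᵥ v) i| ≤ (∑ j, |S i j|) * ‖v‖ := by
  calc |(S *ᵥ v) i| = |∑ j, S i j * v j| := rfl
    _ ≤ ∑ j, |S i j * v j| := Finset.abs_sum_le_sum_abs _ _
    _ ≤ ∑ j, |S i j| * ‖v‖ := Finset.sum_le_sum fun j _ => by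
        rw [abs_mul]
        exact mul_le_mul_of_nonneg_left (norm_le_pi_norm v j) (abs_nonneg _)
    _ = (∑ j, |S i j|) * ‖v‖ := (Finset.sum_mul _ _ _).symm

theorem norm_abs_pi_le {n : Type*} [Fintype n] (z : n → ℝ) : ‖fun i => |z i|‖ ≤ ‖z‖ :=
  (pi_norm_le_iff_of_nonneg (norm_nonneg z)).2 fun i => by
    simpa only [Real.norm_eq_abs, abs_abs] using norm_le_pi_norm z i

theorem Matrix.abs_mulVec_abs_apply_le {m n : Type*} [Fintype n] (S : Matrix m n ℝ) {r : ℝ}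
    (hr : 0 ≤ r) (hS : ∀ i, ∑ j, |S i j| ≤ r) (z : n → ℝ) (i : m) :
    |(S *ᵥ fun j => |z j|) i| ≤ r * ‖z‖ :=
  (S.abs_mulVec_apply_le _ i).trans (mul_le_mul (hS i) (norm_abs_pi_le z) (norm_nonneg _) hr)

theorem one_sub_mul_norm_le_of_sub_mulVec_abs_eq {n : Type*} [Fintype n]
    (S : Matrix n n ℝ) {r : ℝ} (hr : 0 ≤ r) (hS : ∀ i, ∑ j, |S i j| ≤ r) {z c : n → ℝ}
    (h : z - S *ᵥ (fun i => |z i|) = c) : (1 - r) * ‖z‖ ≤ ‖c‖ := by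
  have hrow : ∀ k, |z k| ≤ ‖c‖ + r * ‖z‖ := fun k => by
    have hck : z k = c k + (S *ᵥ fun i => |z i|) k := by rw [← h]; simp
    calc |z k| ≤ |c k| + |(S *ᵥ fun i => |z i|) k| := hck ▸ abs_add_le _ _
      _ ≤ ‖c‖ + r * ‖z‖ :=
        add_le_add (norm_le_pi_norm c k) (S.abs_mulVec_abs_apply_le hr hS z k)
  have hz : ‖z‖ ≤ ‖c‖ + r * ‖z‖ :=
    (pi_norm_le_iff_of_nonneg (by positivity)).2 hrow
  linarith

theorem Real.eq_zero_of_abs_sub_le_of_sign_ne {x c : ℝ} (h : |x - c| ≤ |c|)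
    (hs : Real.sign c ≠ Real.sign x) : x = 0 := by
  obtain ⟨h₁, h₂⟩ := abs_le.1 h
  rcases lt_trichotomy c 0 with hc | rfl | hc
  · rw [abs_of_neg hc] at h₁ h₂
    refine le_antisymm (by linarith) (not_lt.1 fun hx => hs ?_)
    rw [Real.sign_of_neg hc, Real.sign_of_neg hx]
  · simp only [abs_zero, sub_zero] at h₁ h₂
    linarith
  · rw [abs_of_pos hc] at h₁ h₂
    refine le_antisymm (not_lt.1 fun hx => hs ?_) (by linarith)
    rw [Real.sign_of_pos hc, Real.sign_of_pos hx]

theorem stmt_18 {n : ℕ} (S : Matrix (Fin n) (Fin n) ℝ)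
    (hS : ∀ i, ∑ j, |S i j| ≤ 1 / 2) (z c : Fin n → ℝ)
    (h : z - S.mulVec (fun i => |z i|) = c) :
    ∀ i, (∀ k, |c k| ≤ |c i|) → Real.sign (c i) ≠ Real.sign (z i) → z i = 0 := by
  intro i hmax hsign
  have hc : ‖c‖ = |c i| :=
    le_antisymm ((pi_norm_le_iff_of_nonneg (abs_nonneg _)).2 hmax) (norm_le_pi_norm c i)
  have hz : (1 - 1 / 2) * ‖z‖ ≤ ‖c‖ :=
    one_sub_mul_norm_le_of_sub_mulVec_abs_eq S (by norm_num) hS h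
  have hzi : z i - c i = (S *ᵥ fun k => |z k|) i := by rw [← h]; simp
  refine Real.eq_zero_of_abs_sub_le_of_sign_ne ?_ hsign
  calc |z i - c i| = |(S *ᵥ fun k => |z k|) i| := by rw [hzi]
    _ ≤ 1 / 2 * ‖z‖ := S.abs_mulVec_abs_apply_le (by norm_num) hS z i
    _ ≤ |c i| := by linarith
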